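/- Let k be a positive integer and let G be a graph containing an induced subgraph B such that B is (isomorphic to, with V(H) identified with the corresponding subset of V(B)) the k-subdivision Sub_k(H) of some connected simple graph H that contains a cycle, and such that every component K of G − V(H) that contains a vertex from V(B) ∖ V(H) satisfies ν_k(K) = 0. Then ν_k(G) = ν_k(G − V(H)) + |V(H)| and τ_k(G) = τ_k(G − V(H)) + |V(H)|. -/

import Mathlib

open SimpleGraph

/-- `S` is the vertex set of a (not necessarily induced) path of order `k` in `G`,
i.e. a `k`-path of `G`. -/
def IsPathSupport {V : Type*} (k : ℕ) (G : SimpleGraph V) (S : Set V) : Prop :=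
  ∃ (u v : V) (p : G.Walk u v), p.IsPath ∧ p.support.length = k ∧ S = {x | x ∈ p.support}

/-- `X` is a `k`-vertex cover of `G`: every `k`-path of `G` contains a vertex of `X`. -/
def IsKVertexCover {V : Type*} (k : ℕ) (G : SimpleGraph V) (X : Finset V) : Prop :=
  ∀ S : Set V, IsPathSupport k G S → ∃ x ∈ X, x ∈ S

/-- The `k`-matching number `ν_k(G)`: the maximum number of pairwise disjoint
`k`-paths of `G`. -/
noncomputable def nuK {V : Type*} (k : ℕ) (G : SimpleGraph V) : ℕ :=
  sSup {n | ∃ M : Finset (Set V), (∀ S ∈ M, IsPathSupport k G S) ∧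
    (↑M : Set (Set V)).Pairwise Disjoint ∧ M.card = n}

/-- The `k`-vertex cover number `τ_k(G)`: the minimum cardinality of a `k`-vertex cover. -/
noncomputable def tauK {V : Type*} (k : ℕ) (G : SimpleGraph V) : ℕ :=
  sInf {n | ∃ X : Finset V, IsKVertexCover k G X ∧ X.card = n}

/-- `G` belongs to the class `𝒢_k`: `ν_k(H) = τ_k(H)` for every induced subgraph `H` of `G`. -/
def memGclass {V : Type*} (k : ℕ) (G : SimpleGraph V) : Prop :=
  ∀ s : Set V, nuK k (G.induce s) = tauK k (G.induce s)

/-- `G` is the `k`-subdivision `Sub_k(H)` of `H`, with the vertices of `H` embedded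
via the injection `f`: every edge `uv` of `H` is replaced by a path
`f u = g d 0, g d 1, …, g d k = f v` (where `d` is a dart of `H` representing `uv`)
whose `k-1` internal vertices are new vertices, and `G` has no other vertices
or edges. -/
def IsKSubdivisionWith {W V : Type*} (k : ℕ) (H : SimpleGraph W) (G : SimpleGraph V)
    (f : W → V) : Prop :=
  ∃ g : H.Dart → ℕ → V,
    Function.Injective f ∧
    (∀ d : H.Dart, g d 0 = f d.fst ∧ g d k = f d.snd) ∧
    (∀ (d : H.Dart) (i : ℕ), i ≤ k → g d.symm i = g d (k - i)) ∧
    (∀ (d : H.Dart) (i : ℕ), 0 < i → i < k → g d i ∉ Set.range f) ∧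
    (∀ (d d' : H.Dart) (i i' : ℕ), 0 < i → i < k → 0 < i' → i' < k →
      g d i = g d' i' → (d = d' ∧ i = i') ∨ (d = d'.symm ∧ i = k - i')) ∧
    (∀ x y : V, G.Adj x y ↔ ∃ (d : H.Dart) (i : ℕ), i < k ∧ x = g d i ∧ y = g d (i + 1)) ∧
    (∀ x : V, (∃ w, f w = x) ∨ ∃ (d : H.Dart) (i : ℕ), 0 < i ∧ i < k ∧ g d i = x)

/-- `G` is (isomorphic to) the `k`-subdivision `Sub_k(H)` of `H`. -/
def IsKSubdivision {W V : Type*} (k : ℕ) (H : SimpleGraph W) (G : SimpleGraph V) : Prop :=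
  ∃ f : W → V, IsKSubdivisionWith k H G f

/-!
Choose for every vertex `v` of `H` an edge `D v` at `v`, injectively; this is possible because `H`
is connected and contains a cycle. Then `v` followed by the first `k - 1` subdivision vertices of
`D v` is a `k`-path, and these `|V(H)|` paths are pairwise disjoint. A `k`-path of `G - V(H)`
never meets `V(B)`, for it would lie in a component `K` of `G - V(H)` with `ν_k(K) = 0`. So a
maximum `k`-matching of `G - V(H)` extends by the new paths, and a `k`-vertex cover of `G` needs
a separate vertex on each of them besides a cover of `G - V(H)`. Conversely, at most `|V(H)|`
paths of a `k`-matching of `G` meet `V(H)`, and `V(H)` together with a `k`-vertex cover of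
`G - V(H)` covers `G`.
-/

section PathSupport

variable {V : Type*} {k : ℕ} {G : SimpleGraph V}

theorem IsPathSupport.nonempty {S : Set V} (h : IsPathSupport k G S) : S.Nonempty := by
  obtain ⟨u, -, p, -, -, rfl⟩ := h
  exact ⟨u, p.start_mem_support⟩

theorem IsPathSupport.image_val {s : Set V} {T : Set s} (h : IsPathSupport k (G.induce s) T) :
    IsPathSupport k G (Subtype.val '' T) := by
  obtain ⟨u, v, p, hp, hlen, rfl⟩ := h
  refine ⟨_, _, p.map (Embedding.induce s).toHom, hp.map (Embedding.induce (G := G) s).injective,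
    ?_, ?_⟩ <;> rw [Walk.support_map]
  · rw [List.length_map, hlen]
  · ext
    simp

theorem IsPathSupport.preimage_val {s S : Set V} (h : IsPathSupport k G S) (hS : S ⊆ s) :
    IsPathSupport k (G.induce s) (Subtype.val ⁻¹' S) := by
  obtain ⟨u, v, p, hp, hlen, rfl⟩ := h
  refine ⟨_, _, p.induce s fun x hx => hS hx, ?_, by simp [hlen], ?_⟩
  · exact (Walk.isPath_map_iff_of_injective (Embedding.induce (G := G) s).injective).1
      (by rwa [Walk.map_induce])
  · ext
    simp

theorem isPathSupport_image_Iio {g : ℕ → V} (hk : 0 < k)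
    (hadj : ∀ i, i + 1 < k → G.Adj (g i) (g (i + 1))) (hinj : Set.InjOn g (Set.Iio k)) :
    IsPathSupport k G (g '' Set.Iio k) := by
  have hwalk : ∀ n < k, ∃ p : G.Walk (g 0) (g n), p.support = (List.range (n + 1)).map g := by
    intro n
    induction n with
    | zero => exact fun _ => ⟨.nil, rfl⟩
    | succ n ih =>
      intro hn
      obtain ⟨p, hp⟩ := ih (by omega)
      exact ⟨p.concat (hadj n hn), by simp [Walk.support_concat, hp, List.range_succ]⟩
  obtain ⟨p, hp⟩ := hwalk (k - 1) (by omega)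
  rw [Nat.sub_add_cancel hk] at hp
  refine ⟨_, _, p, ?_, by simp [hp], by ext; simp [hp]⟩
  rw [Walk.isPath_def, hp]
  exact List.nodup_range.map_on fun i hi j hj => hinj (by simpa using hi) (by simpa using hj)

theorem IsPathSupport.subset_supp_connectedComponentMk {S : Set V} {x : V}
    (h : IsPathSupport k G S) (hx : x ∈ S) : S ⊆ (G.connectedComponentMk x).supp := by
  classical
  obtain ⟨u, v, p, -, -, rfl⟩ := h
  intro z hz
  rw [ConnectedComponent.mem_supp_iff, ConnectedComponent.eq]
  exact (p.takeUntil z hz).reachable.symm.trans (p.takeUntil x hx).reachable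

end PathSupport

def IsKMatching {V : Type*} (k : ℕ) (G : SimpleGraph V) (M : Finset (Set V)) : Prop :=
  (∀ S ∈ M, IsPathSupport k G S) ∧ (M : Set (Set V)).Pairwise Disjoint

section MatchingCover

variable {V : Type*} {k : ℕ} {G : SimpleGraph V}

theorem IsKMatching.subset {M N : Finset (Set V)} (hM : IsKMatching k G M) (hN : N ⊆ M) :
    IsKMatching k G N :=
  ⟨fun S hS => hM.1 S (hN hS), hM.2.mono (Finset.coe_subset.2 hN)⟩

theorem IsKMatching.image_val {s : Set V} {M : Finset (Set s)}
    (hM : IsKMatching k (G.induce s) M) : IsKMatching k G (M.image (Subtype.val '' ·)) := by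
  refine ⟨?_, ?_⟩
  · simp only [Finset.mem_image]
    rintro _ ⟨T, hT, rfl⟩
    exact (hM.1 T hT).image_val
  · simp only [Finset.coe_image]
    rintro _ ⟨T, hT, rfl⟩ _ ⟨T', hT', rfl⟩ hne
    exact (Set.disjoint_image_iff Subtype.val_injective).2
      (hM.2 hT hT' fun h => hne (congrArg _ h))

theorem IsKMatching.union {M N : Finset (Set V)} (hM : IsKMatching k G M) (hN : IsKMatching k G N)
    (hMN : ∀ S ∈ M, ∀ T ∈ N, Disjoint S T) : IsKMatching k G (M ∪ N) := by
  refine ⟨fun S hS => (Finset.mem_union.1 hS).elim (hM.1 S) (hN.1 S), ?_⟩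
  rw [Finset.coe_union, Set.pairwise_union_of_symm]
  exact ⟨hM.2, hN.2, fun S hS T hT _ => hMN S hS T hT⟩

theorem tauK_le_card {X : Finset V} (hX : IsKVertexCover k G X) : tauK k G ≤ X.card :=
  Nat.sInf_le ⟨X, hX, rfl⟩

variable [Finite V]

theorem le_nuK {M : Finset (Set V)} (hM : IsKMatching k G M) : M.card ≤ nuK k G := by
  have := Fintype.ofFinite V
  classical
  refine le_csSup ⟨Fintype.card (Set V), ?_⟩ ⟨M, hM.1, hM.2, rfl⟩
  rintro _ ⟨N, -, -, rfl⟩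
  exact Finset.card_le_univ N

theorem exists_isKMatching_card_eq_nuK : ∃ M, IsKMatching k G M ∧ M.card = nuK k G := by
  have := Fintype.ofFinite V
  classical
  obtain ⟨M, hM₁, hM₂, hM⟩ : nuK k G ∈ {n | ∃ M : Finset (Set V),
      (∀ S ∈ M, IsPathSupport k G S) ∧ (M : Set (Set V)).Pairwise Disjoint ∧ M.card = n} :=
    Nat.sSup_mem ⟨0, ∅, by simp, by simp, rfl⟩ ⟨Fintype.card (Set V), by
      rintro _ ⟨N, -, -, rfl⟩
      exact Finset.card_le_univ N⟩
  exact ⟨M, ⟨hM₁, hM₂⟩, hM⟩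

theorem card_add_card_le_nuK {M N : Finset (Set V)} (hM : IsKMatching k G M)
    (hN : IsKMatching k G N) (hMN : ∀ S ∈ M, ∀ T ∈ N, Disjoint S T) :
    M.card + N.card ≤ nuK k G := by
  classical
  have hdisj : Disjoint M N := Finset.disjoint_left.2 fun S hSM hSN =>
    (hM.1 S hSM).nonempty.ne_empty (disjoint_self.1 (hMN S hSM S hSN))
  rw [← Finset.card_union_of_disjoint hdisj]
  exact le_nuK (hM.union hN hMN)

theorem card_le_nuK_induce {s : Set V} {M : Finset (Set V)} (hM : IsKMatching k G M)
    (hMs : ∀ S ∈ M, S ⊆ s) : M.card ≤ nuK k (G.induce s) := by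
  classical
  have himage : ∀ S ∈ M, Subtype.val '' (Subtype.val ⁻¹' S : Set s) = S := fun S hS => by
    rw [Subtype.image_preimage_coe, Set.inter_eq_right.2 (hMs S hS)]
  have hinj : Set.InjOn (Subtype.val ⁻¹' · : Set V → Set s) M := fun S hS T hT hST => by
    rw [← himage S hS, ← himage T hT]
    exact congrArg (Subtype.val '' ·) hST
  rw [← Finset.card_image_of_injOn hinj]
  refine le_nuK ⟨?_, ?_⟩
  · simp only [Finset.mem_image]
    rintro _ ⟨S, hS, rfl⟩
    exact (hM.1 S hS).preimage_val (hMs S hS)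
  · simp only [Finset.coe_image]
    rintro _ ⟨S, hS, rfl⟩ _ ⟨T, hT, rfl⟩ hne
    exact (hM.2 hS hT fun h => hne (congrArg _ h)).preimage _

theorem IsPathSupport.nuK_pos {S : Set V} (h : IsPathSupport k G S) : 0 < nuK k G :=
  le_nuK (M := {S}) ⟨by simpa using h, by simp⟩

theorem exists_isKVertexCover_card_eq_tauK : ∃ X, IsKVertexCover k G X ∧ X.card = tauK k G := by
  have := Fintype.ofFinite V
  refine Nat.sInf_mem (s := {n | ∃ X, IsKVertexCover k G X ∧ X.card = n})
    ⟨_, Finset.univ, fun S hS => ?_, rfl⟩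
  obtain ⟨x, hx⟩ := hS.nonempty
  exact ⟨x, Finset.mem_univ x, hx⟩

end MatchingCover

section InduceCompl

open Function

variable {V : Type*} [Finite V] {k : ℕ} {G : SimpleGraph V} {A : Set V}

theorem nuK_le_nuK_induce_compl_add_ncard : nuK k G ≤ nuK k (G.induce Aᶜ) + A.ncard := by
  have := Fintype.ofFinite V
  classical
  obtain ⟨M, hM, hcard⟩ := exists_isKMatching_card_eq_nuK (k := k) (G := G)
  rw [← hcard, ← Finset.card_filter_add_card_filter_not (fun S => ∀ x ∈ S, x ∉ A)]
  gcongr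
  · refine card_le_nuK_induce (hM.subset (Finset.filter_subset _ _)) fun S hS x hx => ?_
    exact (Finset.mem_filter.1 hS).2 x hx
  · rw [Set.ncard_eq_toFinset_card']
    refine Finset.card_le_card_of_forall_subsingleton (fun S x => x ∈ S) (fun S hS => ?_) ?_
    · push Not at hS
      obtain ⟨x, hxS, hxA⟩ := (Finset.mem_filter.1 hS).2
      exact ⟨x, Set.mem_toFinset.2 hxA, hxS⟩
    · rintro x - S ⟨hS, hxS⟩ T ⟨hT, hxT⟩
      by_contra hne
      exact Set.disjoint_left.1 (hM.2 (Finset.mem_filter.1 hS).1 (Finset.mem_filter.1 hT).1 hne)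
        hxS hxT

theorem tauK_le_tauK_induce_compl_add_ncard : tauK k G ≤ tauK k (G.induce Aᶜ) + A.ncard := by
  have := Fintype.ofFinite V
  classical
  obtain ⟨Y, hY, hcard⟩ := exists_isKVertexCover_card_eq_tauK (k := k) (G := G.induce Aᶜ)
  have hX : IsKVertexCover k G (Y.map (Function.Embedding.subtype _) ∪ A.toFinset) := by
    intro S hS
    by_cases hSA : ∃ x ∈ S, x ∈ A
    · obtain ⟨x, hxS, hxA⟩ := hSA
      exact ⟨x, Finset.mem_union_right _ (Set.mem_toFinset.2 hxA), hxS⟩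
    · push Not at hSA
      obtain ⟨y, hyY, hyS⟩ := hY _ (hS.preimage_val hSA)
      exact ⟨y, Finset.mem_union_left _ (Finset.mem_map_of_mem _ hyY), hyS⟩
  calc tauK k G ≤ _ := tauK_le_card hX
    _ ≤ Y.card + A.toFinset.card := (Finset.card_union_le _ _).trans (by simp)
    _ = tauK k (G.induce Aᶜ) + A.ncard := by rw [hcard, Set.ncard_eq_toFinset_card']

variable {P : A → Set V} (hP : ∀ v, IsPathSupport k G (P v)) (hPdisj : Pairwise (Disjoint on P))
  (havoid : ∀ T, IsPathSupport k (G.induce Aᶜ) T → ∀ v, Disjoint (Subtype.val '' T) (P v))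
include hP hPdisj havoid

theorem nuK_induce_compl_add_ncard_le : nuK k (G.induce Aᶜ) + A.ncard ≤ nuK k G := by
  have := Fintype.ofFinite V
  classical
  obtain ⟨M, hM, hcard⟩ := exists_isKMatching_card_eq_nuK (k := k) (G := G.induce Aᶜ)
  have hPinj : Function.Injective P := fun v v' h => by
    by_contra hne
    have hvv' := hPdisj hne
    rw [onFun, h, disjoint_self] at hvv'
    exact (hP v').nonempty.ne_empty hvv'
  have hPM : IsKMatching k G (Finset.univ.image P) := by
    refine ⟨?_, ?_⟩
    · simp only [Finset.mem_image, Finset.mem_univ, true_and]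
      rintro _ ⟨v, rfl⟩
      exact hP v
    simp only [Finset.coe_image, Finset.coe_univ, Set.image_univ]
    rintro _ ⟨v, rfl⟩ _ ⟨v', rfl⟩ hne
    exact hPdisj fun h => hne (congrArg P h)
  calc nuK k (G.induce Aᶜ) + A.ncard
      = (M.image (Subtype.val '' ·)).card + (Finset.univ.image P).card := by
        rw [Finset.card_image_of_injective _ (Set.image_injective.2 Subtype.val_injective),
          Finset.card_image_of_injective _ hPinj, hcard, Finset.card_univ,
          ← Nat.card_eq_fintype_card, Nat.card_coe_set_eq]
    _ ≤ nuK k G := by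
        refine card_add_card_le_nuK hM.image_val hPM ?_
        simp only [Finset.mem_image, Finset.mem_univ, true_and]
        rintro _ ⟨T, hT, rfl⟩ _ ⟨v, rfl⟩
        exact havoid T (hM.1 T hT) v

theorem tauK_induce_compl_add_ncard_le : tauK k (G.induce Aᶜ) + A.ncard ≤ tauK k G := by
  have := Fintype.ofFinite V
  classical
  obtain ⟨X, hX, hcard⟩ := exists_isKVertexCover_card_eq_tauK (k := k) (G := G)
  set X₁ := X.filter fun x => ∃ v, x ∈ P v
  set X₂ := X.filter fun x => ¬∃ v, x ∈ P v
  have hY : IsKVertexCover k (G.induce Aᶜ) (X₂.subtype (· ∈ Aᶜ)) := by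
    intro T hT
    obtain ⟨_, hxX, y, hyT, rfl⟩ := hX _ hT.image_val
    refine ⟨y, Finset.mem_subtype.2 (Finset.mem_filter.2 ⟨hxX, ?_⟩), hyT⟩
    rintro ⟨v, hyP⟩
    exact Set.disjoint_left.1 (havoid T hT v) ⟨y, hyT, rfl⟩ hyP
  have hX₁ : A.ncard ≤ X₁.card := by
    rw [← Nat.card_coe_set_eq, Nat.card_eq_fintype_card, ← Finset.card_univ]
    refine Finset.card_le_card_of_forall_subsingleton (fun v x => x ∈ P v) (fun v _ => ?_) ?_
    · obtain ⟨x, hxX, hxP⟩ := hX _ (hP v)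
      exact ⟨x, Finset.mem_filter.2 ⟨hxX, v, hxP⟩, hxP⟩
    · rintro x - v ⟨-, hxv⟩ v' ⟨-, hxv'⟩
      by_contra hne
      exact Set.disjoint_left.1 (hPdisj hne) hxv hxv'
  calc tauK k (G.induce Aᶜ) + A.ncard ≤ X₂.card + X₁.card := by
        gcongr
        refine (tauK_le_card hY).trans ?_
        rw [Finset.card_subtype]
        exact Finset.card_filter_le _ _
    _ = tauK k G := by rw [add_comm, Finset.card_filter_add_card_filter_not, hcard]

theorem nuK_eq_nuK_induce_compl_add_ncard : nuK k G = nuK k (G.induce Aᶜ) + A.ncard :=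
  nuK_le_nuK_induce_compl_add_ncard.antisymm (nuK_induce_compl_add_ncard_le hP hPdisj havoid)

theorem tauK_eq_tauK_induce_compl_add_ncard : tauK k G = tauK k (G.induce Aᶜ) + A.ncard :=
  tauK_le_tauK_induce_compl_add_ncard.antisymm (tauK_induce_compl_add_ncard_le hP hPdisj havoid)

end InduceCompl

namespace SimpleGraph

variable {W : Type*} {H : SimpleGraph W}

theorem Walk.exists_mem_darts_snd_eq {w x : W} {c : H.Walk w w} (hc : ¬c.Nil)
    (hx : x ∈ c.support) : ∃ d ∈ c.darts, d.snd = x := by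
  have hx' : x ∈ c.support.tail := by
    rcases c.mem_support_iff.1 hx with rfl | hx
    · exact c.end_mem_tail_support hc
    · exact hx
  rw [← c.map_snd_darts] at hx'
  simpa using hx'

theorem Connected.exists_dart_dist_lt (hconn : H.Connected) {v w : W} (hvw : v ≠ w) :
    ∃ d : H.Dart, d.fst = v ∧ H.dist d.snd w < H.dist v w := by
  obtain ⟨p, hp⟩ := (hconn v w).exists_walk_length_eq_dist
  cases p with
  | nil => exact absurd rfl hvw
  | cons h q =>
    rw [Walk.length_cons] at hp
    exact ⟨⟨(v, _), h⟩, rfl, (dist_le q).trans_lt (by omega)⟩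

/-- On the cycle each vertex takes the edge to its predecessor, off the cycle the first edge of a
shortest path to the cycle's base point. -/
theorem Connected.exists_dart_fst_eq_injective_edge (hconn : H.Connected) {w : W}
    {c : H.Walk w w} (hc : c.IsCycle) :
    ∃ D : W → H.Dart, (∀ v, (D v).fst = v) ∧ Function.Injective fun v => (D v).edge := by
  classical
  have hchoice : ∀ v, ∃ d : H.Dart, d.fst = v ∧ (v ∈ c.support → d.symm ∈ c.darts) ∧
      (v ∉ c.support → H.dist d.snd w < H.dist v w) := by
    intro v
    by_cases hv : v ∈ c.support
    · obtain ⟨d, hd, rfl⟩ := c.exists_mem_darts_snd_eq hc.not_nil hv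
      exact ⟨d.symm, rfl, fun _ => by simpa using hd, fun h => absurd hv h⟩
    · have hvw : v ≠ w := by rintro rfl; exact hv c.start_mem_support
      obtain ⟨d, hdv, hdist⟩ := hconn.exists_dart_dist_lt hvw
      exact ⟨d, hdv, fun h => absurd h hv, fun _ => hdist⟩
  choose D hDfst hDcyc hDdist using hchoice
  refine ⟨D, hDfst, fun v v' he => ?_⟩
  have hsnd_mem : ∀ v ∈ c.support, (D v).snd ∈ c.support := fun v hv => by
    simpa using c.dart_fst_mem_support_of_mem_darts (hDcyc v hv)
  rcases (dart_edge_eq_iff _ _).1 he with h | h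
  · rw [← hDfst v, ← hDfst v', h]
  have hv : (D v).snd = v' := by simp [h, hDfst]
  have hv' : (D v').snd = v := by rw [← hDfst v, h]; rfl
  by_cases hvc : v ∈ c.support <;> by_cases hvc' : v' ∈ c.support
  · have hnodup : (c.darts.map Dart.edge).Nodup := hc.edges_nodup
    have := List.inj_on_of_nodup_map hnodup (hDcyc v hvc) (hDcyc v' hvc')
      (by simpa only [Dart.edge_symm] using he)
    rw [← hDfst v, ← hDfst v', ← Dart.symm_symm (D v), this, Dart.symm_symm]
  · exact absurd (hv ▸ hsnd_mem v hvc) hvc'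
  · exact absurd (hv' ▸ hsnd_mem v' hvc') hvc
  · have hlt := hDdist v hvc
    have hlt' := hDdist v' hvc'
    rw [hv] at hlt
    rw [hv'] at hlt'
    omega

end SimpleGraph

open Function in
/-- `P v` consists of `f v` and the first `k - 1` subdivision vertices of the edge `D v`. -/
theorem IsKSubdivisionWith.exists_pairwise_disjoint_pathSupport {W U : Type*} {k : ℕ}
    {H : SimpleGraph W} {B : SimpleGraph U} {f : W → U} (hk : 0 < k)
    (hB : IsKSubdivisionWith k H B f) (D : W → H.Dart) (hDfst : ∀ v, (D v).fst = v)
    (hDinj : Injective fun v => (D v).edge) :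
    ∃ P : W → Set U, (∀ v, IsPathSupport k B (P v)) ∧ Pairwise (Disjoint on P) := by
  obtain ⟨g, hf, hg, -, hint, hinj, hadj, -⟩ := hB
  have hrange : ∀ d i, i < k → (g d i ∈ Set.range f ↔ i = 0) := fun d i hi =>
    ⟨fun h => by_contra fun h0 => hint d i (Nat.pos_of_ne_zero h0) hi h,
      by rintro rfl; exact ⟨d.fst, (hg d).1.symm⟩⟩
  have hginj : ∀ d, Set.InjOn (g d) (Set.Iio k) := fun d i hi j hj hij => by
    by_cases hgi : g d i ∈ Set.range f
    · rw [(hrange d i hi).1 hgi, (hrange d j hj).1 (hij ▸ hgi)]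
    · have hi0 := Nat.pos_of_ne_zero (mt (hrange d i hi).2 hgi)
      have hj0 := Nat.pos_of_ne_zero (mt (hrange d j hj).2 (hij ▸ hgi))
      rcases hinj d d i j hi0 hi hj0 hj hij with h | ⟨h, -⟩
      · exact h.2
      · exact absurd h.symm d.symm_ne
  refine ⟨fun v => g (D v) '' Set.Iio k, fun v => isPathSupport_image_Iio hk
    (fun i hi => (hadj _ _).2 ⟨D v, i, by omega, rfl, rfl⟩) (hginj _), fun v v' hne => ?_⟩
  rw [onFun, Set.disjoint_left]
  rintro _ ⟨i, hi, rfl⟩ ⟨j, hj, hij⟩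
  by_cases hgi : g (D v) i ∈ Set.range f
  · have hi0 := (hrange _ i hi).1 hgi
    have hj0 := (hrange _ j hj).1 (hij ▸ hgi)
    subst hi0 hj0
    rw [(hg _).1, (hg _).1, hDfst, hDfst] at hij
    exact hne (hf hij).symm
  · have hi0 := Nat.pos_of_ne_zero (mt (hrange _ i hi).2 hgi)
    have hj0 := Nat.pos_of_ne_zero (mt (hrange _ j hj).2 (hij ▸ hgi))
    refine hne (hDinj ?_).symm
    rcases hinj _ _ j i hj0 hj hi0 hi hij with ⟨h, -⟩ | ⟨h, -⟩
    · exact congrArg Dart.edge h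
    · simp only [h, Dart.edge_symm]

/-- If `G` contains an induced subgraph `B` (induced on the vertex set `VB`) which is
the `k`-subdivision of a connected graph `H` (on the vertex set `VH ⊆ VB`, embedded
by inclusion) containing a cycle, and every component of `G - VH` containing a vertex
of `VB \ VH` has `k`-matching number `0`, then
`ν_k(G) = ν_k(G - VH) + |VH|` and `τ_k(G) = τ_k(G - VH) + |VH|`. -/
theorem stmt10 {V : Type*} [Fintype V] (k : ℕ) (hk : 0 < k) (G : SimpleGraph V)
    (VH VB : Set V) (hVHB : VH ⊆ VB) (H : SimpleGraph ↥VH)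
    (hB : IsKSubdivisionWith k H (G.induce VB) (Set.inclusion hVHB))
    (hconn : H.Connected)
    (hcyc : ∃ (w : ↥VH) (c : H.Walk w w), c.IsCycle)
    (hcomp : ∀ x : ↥(VHᶜ), (x : V) ∈ VB \ VH →
      nuK k ((G.induce VHᶜ).induce ((G.induce VHᶜ).connectedComponentMk x).supp) = 0) :
    nuK k G = nuK k (G.induce VHᶜ) + VH.ncard ∧
      tauK k G = tauK k (G.induce VHᶜ) + VH.ncard := by
  obtain ⟨w, c, hc⟩ := hcyc
  obtain ⟨D, hDfst, hDinj⟩ := hconn.exists_dart_fst_eq_injective_edge hc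
  obtain ⟨P, hP, hPdisj⟩ := hB.exists_pairwise_disjoint_pathSupport hk D hDfst hDinj
  have hP' : ∀ v, IsPathSupport k G (Subtype.val '' P v) := fun v => (hP v).image_val
  have hPdisj' : Pairwise fun v v' => Disjoint (Subtype.val '' P v) (Subtype.val '' P v') :=
    fun v v' hne => (Set.disjoint_image_iff Subtype.val_injective).2 (hPdisj hne)
  -- A `k`-path of `G - VH` meeting `VB` would make `ν_k` of its component positive.
  have havoid : ∀ T, IsPathSupport k (G.induce VHᶜ) T →
      ∀ v, Disjoint (Subtype.val '' T) (Subtype.val '' P v) := by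
    refine fun T hT v => Set.disjoint_left.2 ?_
    rintro _ ⟨y, hyT, rfl⟩ ⟨x, -, hxy⟩
    have hpos := (hT.preimage_val (hT.subset_supp_connectedComponentMk hyT)).nuK_pos
    exact hpos.ne' (hcomp y ⟨hxy ▸ x.2, y.2⟩)
  exact ⟨nuK_eq_nuK_induce_compl_add_ncard hP' hPdisj' havoid,
    tauK_eq_tauK_induce_compl_add_ncard hP' hPdisj' havoid⟩
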